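/- A generalized topological space is sλ-normal if and only if for every sλ-closed set P and every sλ-open set G containing P there exists an sg_λ-open set E with P ⊆ E ⊆ cl_sλ(E) ⊆ G. -/
import Mathlib


open Set

variable {Y : Type*}

/-- A generalized topology: contains ∅ and is closed under arbitrary unions. -/
def IsGT (γ : Set (Set Y)) : Prop := ∅ ∈ γ ∧ ∀ S ⊆ γ, ⋃₀ S ∈ γ

/-- γ-closure: intersection of all γ-closed supersets. -/
def gCl (γ : Set (Set Y)) (D : Set Y) : Set Y := ⋂₀ {C | Cᶜ ∈ γ ∧ D ⊆ C}

/-- sγ-open set. -/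
def SOpen (γ : Set (Set Y)) (D : Set Y) : Prop := ∃ V ∈ γ, V ⊆ D ∧ D ⊆ gCl γ V

/-- sγ-closed set. -/
def SClosed (γ : Set (Set Y)) (D : Set Y) : Prop := SOpen γ Dᶜ

/-- semi-kernel: intersection of all sγ-open supersets. -/
def sKer (γ : Set (Set Y)) (D : Set Y) : Set Y := ⋂₀ {G | SOpen γ G ∧ D ⊆ G}

/-- sγ-closure: intersection of all sγ-closed supersets. -/
def sCl (γ : Set (Set Y)) (D : Set Y) : Set Y := ⋂₀ {C | SClosed γ C ∧ D ⊆ C}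

/-- sλ-closed set. -/
def SLClosed (γ : Set (Set Y)) (D : Set Y) : Prop :=
  ∃ M N : Set Y, M = sKer γ M ∧ SClosed γ N ∧ D = M ∩ N

/-- sλ-open set. -/
def SLOpen (γ : Set (Set Y)) (D : Set Y) : Prop := SLClosed γ Dᶜ

/-- sλ-closure: intersection of all sλ-closed supersets. -/
def slCl (γ : Set (Set Y)) (D : Set Y) : Set Y := ⋂₀ {C | SLClosed γ C ∧ D ⊆ C}

/-- sλ-interior: union of all sλ-open subsets. -/
def slInt (γ : Set (Set Y)) (D : Set Y) : Set Y := ⋃₀ {U | SLOpen γ U ∧ U ⊆ D}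

/-- sg_λ-closed set. -/
def SgClosed (γ : Set (Set Y)) (D : Set Y) : Prop :=
  ∀ V : Set Y, SLOpen γ V → D ⊆ V → slCl γ D ⊆ V

/-- sg_λ-open set. -/
def SgOpen (γ : Set (Set Y)) (D : Set Y) : Prop := SgClosed γ Dᶜ

/-- sλR₀: every sλ-open set contains the sλ-closure of each of its singletons. -/
def SLR0 (γ : Set (Set Y)) : Prop :=
  ∀ G : Set Y, SLOpen γ G → ∀ y ∈ G, slCl γ {y} ⊆ G

/-- sλR₁. -/
def SLR1 (γ : Set (Set Y)) : Prop :=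
  ∀ p q : Y, p ∉ slCl γ {q} →
    ∃ E F : Set Y, SLOpen γ E ∧ SLOpen γ F ∧ p ∈ E ∧ q ∈ F ∧ E ∩ F = ∅

/-- sλT₁. -/
def SLT1 (γ : Set (Set Y)) : Prop :=
  ∀ p q : Y, p ≠ q →
    ∃ E F : Set Y, SLOpen γ E ∧ SLOpen γ F ∧ p ∈ E ∧ q ∉ E ∧ q ∈ F ∧ p ∉ F

/-- sλT₂ (sλ-Hausdorff). -/
def SLT2 (γ : Set (Set Y)) : Prop :=
  ∀ p q : Y, p ≠ q →
    ∃ E F : Set Y, SLOpen γ E ∧ SLOpen γ F ∧ p ∈ E ∧ q ∈ F ∧ E ∩ F = ∅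

/-- sλ-regular. -/
def SLRegular (γ : Set (Set Y)) : Prop :=
  ∀ A : Set Y, SLClosed γ A → ∀ p : Y, p ∉ A →
    ∃ E F : Set Y, SLOpen γ E ∧ SLOpen γ F ∧ A ⊆ E ∧ p ∈ F ∧
      slCl γ E ∩ slCl γ F = ∅

/-- sλ-normal. -/
def SLNormal (γ : Set (Set Y)) : Prop :=
  ∀ A B : Set Y, SLClosed γ A → SLClosed γ B → A ∩ B = ∅ →
    ∃ E F : Set Y, SLOpen γ E ∧ SLOpen γ F ∧ A ⊆ E ∧ B ⊆ F ∧
      slCl γ E ∩ slCl γ F = ∅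

/-- sλ-compact. -/
def SLCompact (γ : Set (Set Y)) : Prop :=
  ∀ 𝒞 : Set (Set Y), (∀ U ∈ 𝒞, SLOpen γ U) → ⋃₀ 𝒞 = univ →
    ∃ 𝒟 : Finset (Set Y), ↑𝒟 ⊆ 𝒞 ∧ ⋃₀ (𝒟 : Set (Set Y)) = univ

/-- sλ-weakly separated. -/
def SLWeaklySeparated (γ : Set (Set Y)) (G H : Set Y) : Prop :=
  (G ∩ slCl γ H) ∪ (H ∩ slCl γ G) = ∅

/-- sλ-completely normal. -/
def SLCompletelyNormal (γ : Set (Set Y)) : Prop :=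
  ∀ G H : Set Y, SLWeaklySeparated γ G H →
    ∃ U V : Set Y, SLOpen γ U ∧ SLOpen γ V ∧ G ⊆ U ∧ H ⊆ V ∧
      slCl γ U ∩ slCl γ V = ∅

/-- sλ-continuous real-valued function. -/
def SLContinuousReal (γ : Set (Set Y)) (f : Y → ℝ) : Prop :=
  ∀ s : Set ℝ, IsOpen s → SLOpen γ (f ⁻¹' s)

lemma gCl_mono (γ : Set (Set Y)) {D E : Set Y} (h : D ⊆ E) : gCl γ D ⊆ gCl γ E :=
  fun x hx => mem_sInter.2 fun C hC => mem_sInter.1 hx C ⟨hC.1, h.trans hC.2⟩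

lemma sOpen_sUnion {γ : Set (Set Y)} (hγ : IsGT γ) {S : Set (Set Y)}
    (h : ∀ D ∈ S, SOpen γ D) : SOpen γ (⋃₀ S) := by
  choose V hVγ hVsub hVcl using h
  refine ⟨⋃₀ {T | ∃ D, ∃ hD : D ∈ S, T = V D hD}, hγ.2 _ ?_, ?_, ?_⟩
  · rintro T ⟨D, hD, rfl⟩; exact hVγ D hD
  · rintro x ⟨T, ⟨D, hD, rfl⟩, hx⟩; exact ⟨D, hD, hVsub D hD hx⟩
  · rintro x ⟨D, hD, hx⟩
    have hsub : V D hD ⊆ ⋃₀ {T | ∃ D, ∃ hD : D ∈ S, T = V D hD} :=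
      subset_sUnion_of_mem ⟨D, hD, rfl⟩
    exact gCl_mono γ hsub (hVcl D hD hx)

lemma sClosed_sInter {γ : Set (Set Y)} (hγ : IsGT γ) {S : Set (Set Y)}
    (h : ∀ C ∈ S, SClosed γ C) : SClosed γ (⋂₀ S) := by
  have : SOpen γ (⋃₀ (compl '' S)) := by
    apply sOpen_sUnion hγ
    rintro D ⟨C, hC, rfl⟩; exact h C hC
  unfold SClosed
  rwa [compl_sInter]

lemma subset_sKer (γ : Set (Set Y)) (D : Set Y) : D ⊆ sKer γ D :=
  fun _ hx => mem_sInter.2 fun _ hG => hG.2 hx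

lemma sKer_mono (γ : Set (Set Y)) {D E : Set Y} (h : D ⊆ E) : sKer γ D ⊆ sKer γ E :=
  fun x hx => mem_sInter.2 fun G hG => mem_sInter.1 hx G ⟨hG.1, h.trans hG.2⟩

lemma slClosed_sInter {γ : Set (Set Y)} (hγ : IsGT γ) {S : Set (Set Y)}
    (h : ∀ C ∈ S, SLClosed γ C) : SLClosed γ (⋂₀ S) := by
  choose M N hM hN hMN using h
  refine ⟨⋂₀ {T | ∃ C, ∃ hC : C ∈ S, T = M C hC},
          ⋂₀ {T | ∃ C, ∃ hC : C ∈ S, T = N C hC}, ?_, ?_, ?_⟩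
  · refine Subset.antisymm (subset_sKer _ _) ?_
    intro x hx
    refine mem_sInter.2 ?_
    rintro T ⟨C, hC, rfl⟩
    have h1 : ⋂₀ {T | ∃ C, ∃ hC : C ∈ S, T = M C hC} ⊆ M C hC :=
      sInter_subset_of_mem ⟨C, hC, rfl⟩
    have h2 := sKer_mono γ h1 hx
    rwa [← hM C hC] at h2
  · exact sClosed_sInter hγ (by rintro T ⟨C, hC, rfl⟩; exact hN C hC)
  · ext x
    simp only [mem_sInter, mem_inter_iff, mem_setOf_eq]
    constructor
    · intro hx
      constructor <;> (rintro T ⟨C, hC, rfl⟩)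
      · exact ((hMN C hC ▸ hx C hC : x ∈ M C hC ∩ N C hC)).1
      · exact ((hMN C hC ▸ hx C hC : x ∈ M C hC ∩ N C hC)).2
    · rintro ⟨h1, h2⟩ C hC
      rw [hMN C hC]
      exact ⟨h1 _ ⟨C, hC, rfl⟩, h2 _ ⟨C, hC, rfl⟩⟩

lemma subset_slCl (γ : Set (Set Y)) (D : Set Y) : D ⊆ slCl γ D :=
  fun _ hx => mem_sInter.2 fun _ hC => hC.2 hx

lemma slCl_mono (γ : Set (Set Y)) {D E : Set Y} (h : D ⊆ E) : slCl γ D ⊆ slCl γ E :=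
  fun x hx => mem_sInter.2 fun C hC => mem_sInter.1 hx C ⟨hC.1, h.trans hC.2⟩

lemma slCl_subset {γ : Set (Set Y)} {D C : Set Y} (hC : SLClosed γ C) (h : D ⊆ C) :
    slCl γ D ⊆ C := sInter_subset_of_mem ⟨hC, h⟩

lemma slClosed_slCl {γ : Set (Set Y)} (hγ : IsGT γ) (D : Set Y) : SLClosed γ (slCl γ D) :=
  slClosed_sInter hγ fun _ hC => hC.1

lemma slOpen_sUnion {γ : Set (Set Y)} (hγ : IsGT γ) {S : Set (Set Y)}
    (h : ∀ U ∈ S, SLOpen γ U) : SLOpen γ (⋃₀ S) := by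
  unfold SLOpen SLClosed at *
  rw [compl_sUnion]
  exact slClosed_sInter hγ (by rintro T ⟨C, hC, rfl⟩; exact h C hC)

lemma slOpen_slInt {γ : Set (Set Y)} (hγ : IsGT γ) (D : Set Y) : SLOpen γ (slInt γ D) :=
  slOpen_sUnion hγ fun _ hU => hU.1

lemma slInt_subset (γ : Set (Set Y)) (D : Set Y) : slInt γ D ⊆ D :=
  fun _ ⟨_, hU, hx⟩ => hU.2 hx

lemma slOpen_sgOpen {γ : Set (Set Y)} {E : Set Y} (h : SLOpen γ E) : SgOpen γ E :=
  fun V _ hEV => (slCl_subset h (subset_refl _)).trans hEV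

lemma slClosed_compl_slOpen {γ : Set (Set Y)} {P : Set Y} (h : SLClosed γ P) :
    SLOpen γ Pᶜ := by unfold SLOpen; rwa [compl_compl]

lemma closed_subset_slInt {γ : Set (Set Y)} (hγ : IsGT γ) {P D : Set Y}
    (hP : SLClosed γ P) (hD : SgOpen γ D) (h : P ⊆ D) : P ⊆ slInt γ D := by
  have h1 : slCl γ Dᶜ ⊆ Pᶜ := hD Pᶜ (slClosed_compl_slOpen hP) (compl_subset_compl.2 h)
  have h2 : P ⊆ (slCl γ Dᶜ)ᶜ := by
    intro x hx hxc
    exact h1 hxc hx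
  refine h2.trans (subset_sUnion_of_mem ⟨?_, ?_⟩)
  · exact slClosed_compl_slOpen (slClosed_slCl hγ Dᶜ)
  · rw [compl_subset_comm]
    exact subset_slCl γ Dᶜ

theorem stmt15 (γ : Set (Set Y)) (hγ : IsGT γ) :
    SLNormal γ ↔
      ∀ P G : Set Y, SLClosed γ P → SLOpen γ G → P ⊆ G →
        ∃ E : Set Y, SgOpen γ E ∧ P ⊆ E ∧ E ⊆ slCl γ E ∧ slCl γ E ⊆ G := by
  constructor
  · intro hN P G hP hG hPG
    have hGc : SLClosed γ Gᶜ := hG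
    have hdisj : P ∩ Gᶜ = ∅ := by
      ext x; simp only [mem_inter_iff, mem_compl_iff, mem_empty_iff_false, iff_false]
      rintro ⟨h1, h2⟩; exact h2 (hPG h1)
    obtain ⟨E, F, hE, hF, hPE, hGF, hEF⟩ := hN P Gᶜ hP hGc hdisj
    refine ⟨E, slOpen_sgOpen hE, hPE, subset_slCl γ E, ?_⟩
    intro x hx
    by_contra hxG
    have : x ∈ slCl γ E ∩ slCl γ F := ⟨hx, subset_slCl γ F (hGF hxG)⟩
    rw [hEF] at this
    exact this
  · intro h A B hA hB hAB
    -- B ⊆ Aᶜ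
    have hBA : B ⊆ Aᶜ := by
      intro x hxB hxA
      have : x ∈ A ∩ B := ⟨hxA, hxB⟩
      rw [hAB] at this; exact this
    obtain ⟨E1, hE1g, hBE1, _, hclE1⟩ := h B Aᶜ hB (slClosed_compl_slOpen hA) hBA
    set F : Set Y := slInt γ E1 with hFdef
    have hF : SLOpen γ F := slOpen_slInt hγ E1
    have hBF : B ⊆ F := closed_subset_slInt hγ hB hE1g hBE1
    have hclF : slCl γ F ⊆ Aᶜ := (slCl_mono γ (slInt_subset γ E1)).trans hclE1
    -- now A ⊆ (slCl F)ᶜ which is sλ-open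
    have hAc : A ⊆ (slCl γ F)ᶜ := by
      intro x hx hxc
      exact hclF hxc hx
    obtain ⟨E2, hE2g, hAE2, _, hclE2⟩ :=
      h A (slCl γ F)ᶜ hA (slClosed_compl_slOpen (slClosed_slCl hγ F)) hAc
    set U : Set Y := slInt γ E2 with hUdef
    refine ⟨U, F, slOpen_slInt hγ E2, hF, closed_subset_slInt hγ hA hE2g hAE2, hBF, ?_⟩
    have hclU : slCl γ U ⊆ (slCl γ F)ᶜ := (slCl_mono γ (slInt_subset γ E2)).trans hclE2
    ext x
    simp only [mem_inter_iff, mem_empty_iff_false, iff_false]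
    rintro ⟨h1, h2⟩
    exact hclU h1 h2
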